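/- arXiv:2011.09603 — 6 statements merged into one kernel-verified Lean document; each statement's English description precedes it below -/
import Mathlib

section
/- Let {x_n}, {y_n}, {z_n} (n ∈ ℤ\{0}) be complex sequences satisfying x_{n1}·y_{n2} − x_{n1+n2}·z_{n2} + y_{n1+n2}·z_{−n1} = 0 for all n1 ≠ 0, n2 ≠ 0, n1+n2 ≠ 0, the parity condition x_{−n} = conj(x_n), y_{−n} = conj(y_n), z_{−n} = conj(z_n), and the summability condition ∑_{n≥1} (|x_n| + |y_n| + |z_n|) < ∞. Then the solution is one-dimensional: either y_n = z_n = 0 for all n ≠ 0, or x_n = z_n = 0 for all n ≠ 0, or x_n = y_n = 0 for all n ≠ 0. -/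
/-!
Fix A > 0 with x_A ≠ 0 and let μ = max(|x_A|, |y_A|). The equations at (-k, k + A) and
(k, k + A), or at (-(k + A), k) and (k + A, k) when |x_A| ≥ |y_A|, combine to
|z_{k+A}| ≥ (1 - e_k) |z_k| with e_k = 2 (|x_{2k+A}| + |y_{2k+A}|) / μ summable. Far out, the
products of the factors 1 - e_k along a progression k + jA stay above 1 - Σ e > 0, so z_k → 0
forces z_k = 0 for all large k. Once z vanishes far out, the equations give |y_{m+A}| ≥ |y_m| and
|x_{n+q}| ≥ |x_n| (for q > 0 with y_q ≠ 0), so x and y vanish far out too, and at the largest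
p, q with x_p ≠ 0 ≠ y_q the equation at (p, q) reads x_p y_q = 0. If x or y vanishes
identically, the equations kill z directly.
-/

open Filter Topology Finset

theorem eq_zero_of_tendsto_zero_of_one_sub_mul_le {ζ e : ℕ → ℝ} (hζ₀ : 0 ≤ ζ 0)
    (hζ : Tendsto ζ atTop (𝓝 0)) (he : ∀ j, 0 ≤ e j) (hes : Summable e) (he₁ : ∑' j, e j < 1)
    (hstep : ∀ j, (1 - e j) * ζ j ≤ ζ (j + 1)) : ζ 0 = 0 := by
  have hpartial : ∀ J, (1 - ∑ j ∈ range J, e j) * ζ 0 ≤ ζ J := by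
    intro J
    induction J with
    | zero => simp
    | succ J ih =>
      have heJ : e J ≤ 1 := (hes.le_tsum J fun j _ => he j).trans he₁.le
      have hS : 0 ≤ ∑ j ∈ range J, e j := sum_nonneg fun j _ => he j
      calc (1 - ∑ j ∈ range (J + 1), e j) * ζ 0
          ≤ (1 - e J) * ((1 - ∑ j ∈ range J, e j) * ζ 0) := by
            rw [sum_range_succ]; nlinarith [mul_nonneg (mul_nonneg (he J) hS) hζ₀]
        _ ≤ (1 - e J) * ζ J := mul_le_mul_of_nonneg_left ih (by linarith)
        _ ≤ ζ (J + 1) := hstep J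
  have hlower : ∀ J, (1 - ∑' j, e j) * ζ 0 ≤ ζ J := fun J =>
    (mul_le_mul_of_nonneg_right (by linarith [hes.sum_le_tsum (range J) fun j _ => he j]) hζ₀).trans
      (hpartial J)
  have := ge_of_tendsto' hζ hlower
  nlinarith

theorem eventually_eq_zero_of_one_sub_mul_le {ζ e : ℕ → ℝ} {A : ℕ} (hA : 0 < A)
    (hζ₀ : ∀ k, 0 ≤ ζ k) (hζ : Tendsto ζ atTop (𝓝 0)) (he : ∀ k, 0 ≤ e k) (hes : Summable e)
    (hstep : ∀ᶠ k in atTop, (1 - e k) * ζ k ≤ ζ (k + A)) : ∀ᶠ k in atTop, ζ k = 0 := by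
  obtain ⟨N₁, hN₁⟩ := eventually_atTop.1 hstep
  obtain ⟨N₂, hN₂⟩ := eventually_atTop.1
    ((tendsto_sum_nat_add e).eventually (gt_mem_nhds zero_lt_one))
  refine eventually_atTop.2 ⟨max N₁ N₂, fun k hk => ?_⟩
  have hinj : Function.Injective fun j : ℕ => k - N₂ + j * A := fun i j hij => by
    simpa [hA.ne'] using hij
  have hprog : (fun j : ℕ => e (k + j * A)) = (fun m => e (m + N₂)) ∘ fun j => k - N₂ + j * A := by
    funext j; simp only [Function.comp_apply]; congr 1; omega
  suffices h₀ : ζ (k + 0 * A) = 0 by simpa using h₀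
  refine eq_zero_of_tendsto_zero_of_one_sub_mul_le (ζ := fun j => ζ (k + j * A))
    (e := fun j => e (k + j * A)) (hζ₀ _) (hζ.comp ?_) (fun j => he _) ?_ ?_ fun j => ?_
  · exact tendsto_atTop_mono (fun j => le_add_left (Nat.le_mul_of_pos_right j hA)) tendsto_id
  · rw [hprog]; exact ((summable_nat_add_iff N₂).2 hes).comp_injective hinj
  · rw [hprog]
    exact (tsum_comp_le_tsum_of_inj ((summable_nat_add_iff N₂).2 hes) (fun m => he _) hinj).trans_lt
      (hN₂ N₂ le_rfl)
  · simpa [add_mul, add_assoc] using hN₁ (k + j * A) (by omega)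

theorem one_sub_two_mul_div_mul_le {μ β w a b : ℝ} (hμ : 0 < μ) (hβ : β ≤ μ) (hw : 0 ≤ w)
    (ha : 0 ≤ a) (hb : 0 ≤ b) (h : μ * a ≤ β * b + w * (a + b)) : (1 - 2 * w / μ) * a ≤ b := by
  have key : (μ - 2 * w) * a ≤ μ * b := by
    rcases le_total a b with hab | hab <;> nlinarith [mul_le_mul_of_nonneg_right hβ hb]
  calc (1 - 2 * w / μ) * a = (μ - 2 * w) * a / μ := by field_simp
    _ ≤ μ * b / μ := by gcongr
    _ = b := by field_simp

theorem exists_le_ne_zero_and_forall_lt_eq_zero {M : Type*} [Zero M] {f : ℕ → M}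
    (hf : ∀ᶠ n in atTop, f n = 0) {p : ℕ} (hp : f p ≠ 0) :
    ∃ p', p ≤ p' ∧ f p' ≠ 0 ∧ ∀ n, p' < n → f n = 0 := by
  classical
  obtain ⟨B, hB⟩ := eventually_atTop.1 hf
  have hpB : p ≤ B := by by_contra hlt; exact hp (hB p (by omega))
  refine ⟨Nat.findGreatest (fun n => f n ≠ 0) B, Nat.le_findGreatest hpB hp,
    Nat.findGreatest_spec (P := fun n => f n ≠ 0) hpB hp, fun n hn => ?_⟩
  by_cases hnB : n ≤ B
  · simpa using Nat.findGreatest_is_greatest hn hnB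
  · exact hB n (by omega)

variable {𝕜 : Type*} [NormedField 𝕜] {x y z : ℤ → 𝕜}

theorem exists_ne_zero_and_add_ne_zero {f : ℤ → 𝕜} (hf : ∀ n, ‖f (-n)‖ = ‖f n‖) {b : ℤ}
    (hb : b ≠ 0) (hfb : f b ≠ 0) (j : ℤ) : ∃ c, c ≠ 0 ∧ f c ≠ 0 ∧ j + c ≠ 0 := by
  by_cases hjb : j + b = 0
  · refine ⟨-b, neg_ne_zero.2 hb, ?_, by omega⟩
    rw [← norm_ne_zero_iff, hf]
    exact norm_ne_zero_iff.2 hfb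
  · exact ⟨b, hb, hfb, hjb⟩

theorem exists_pos_ne_zero {f : ℤ → 𝕜} (hf : ∀ n, ‖f (-n)‖ = ‖f n‖) {b : ℤ} (hb : b ≠ 0)
    (hfb : f b ≠ 0) : ∃ p : ℕ, 0 < p ∧ f p ≠ 0 := by
  refine ⟨b.natAbs, Int.natAbs_pos.2 hb, ?_⟩
  rcases Int.natAbs_eq b with hb' | hb'
  · rwa [← hb']
  · rw [← norm_ne_zero_iff, ← hf, ← hb']
    exact norm_ne_zero_iff.2 hfb

def TrilinearSystem (x y z : ℤ → 𝕜) : Prop :=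
  ∀ n1 n2 : ℤ, n1 ≠ 0 → n2 ≠ 0 → n1 + n2 ≠ 0 →
    x n1 * y n2 - x (n1 + n2) * z n2 + y (n1 + n2) * z (-n1) = 0

namespace TrilinearSystem

theorem norm_xy_le (h : TrilinearSystem x y z) {a b : ℤ} (ha : a ≠ 0) (hb : b ≠ 0)
    (hab : a + b ≠ 0) : ‖x a‖ * ‖y b‖ ≤ ‖x (a + b)‖ * ‖z b‖ + ‖y (a + b)‖ * ‖z (-a)‖ := by
  simp only [← norm_mul]
  calc ‖x a * y b‖ = ‖x (a + b) * z b - y (a + b) * z (-a)‖ := by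
        congr 1; linear_combination h a b ha hb hab
    _ ≤ _ := norm_sub_le _ _

theorem norm_xz_le (h : TrilinearSystem x y z) {a b : ℤ} (ha : a ≠ 0) (hb : b ≠ 0)
    (hab : a + b ≠ 0) : ‖x (a + b)‖ * ‖z b‖ ≤ ‖x a‖ * ‖y b‖ + ‖y (a + b)‖ * ‖z (-a)‖ := by
  simp only [← norm_mul]
  calc ‖x (a + b) * z b‖ = ‖x a * y b + y (a + b) * z (-a)‖ := by
        congr 1; linear_combination -h a b ha hb hab
    _ ≤ _ := norm_add_le _ _

theorem norm_yz_le (h : TrilinearSystem x y z) {a b : ℤ} (ha : a ≠ 0) (hb : b ≠ 0)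
    (hab : a + b ≠ 0) : ‖y (a + b)‖ * ‖z (-a)‖ ≤ ‖x a‖ * ‖y b‖ + ‖x (a + b)‖ * ‖z b‖ := by
  simp only [← norm_mul]
  calc ‖y (a + b) * z (-a)‖ = ‖x (a + b) * z b - x a * y b‖ := by
        congr 1; linear_combination h a b ha hb hab
    _ ≤ _ := (norm_sub_le _ _).trans_eq (add_comm _ _)

theorem norm_y_mul_norm_z_le (h : TrilinearSystem x y z) (hx : ∀ n, ‖x (-n)‖ = ‖x n‖)
    (hz : ∀ n, ‖z (-n)‖ = ‖z n‖) {A k : ℤ} (hA : 0 < A) (hk : 0 < k) :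
    ‖y A‖ * ‖z k‖ ≤ ‖x A‖ * ‖z (k + A)‖ +
      (‖x (2 * k + A)‖ + ‖y (2 * k + A)‖) * (‖z k‖ + ‖z (k + A)‖) := by
  have h₁ := h.norm_yz_le (a := -k) (b := k + A) (by omega) (by omega) (by omega)
  have h₂ := h.norm_xy_le (a := k) (b := k + A) (by omega) (by omega) (by omega)
  rw [show -k + (k + A) = A by ring, neg_neg, hx] at h₁
  rw [show k + (k + A) = 2 * k + A by ring, hz] at h₂
  nlinarith [mul_nonneg (norm_nonneg (x (2 * k + A))) (norm_nonneg (z k)),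
    mul_nonneg (norm_nonneg (y (2 * k + A))) (norm_nonneg (z (k + A)))]

theorem norm_x_mul_norm_z_le (h : TrilinearSystem x y z) (hx : ∀ n, ‖x (-n)‖ = ‖x n‖)
    (hy : ∀ n, ‖y (-n)‖ = ‖y n‖) (hz : ∀ n, ‖z (-n)‖ = ‖z n‖) {A k : ℤ} (hA : 0 < A) (hk : 0 < k) :
    ‖x A‖ * ‖z k‖ ≤ ‖y A‖ * ‖z (k + A)‖ +
      (‖x (2 * k + A)‖ + ‖y (2 * k + A)‖) * (‖z k‖ + ‖z (k + A)‖) := by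
  have h₁ := h.norm_xz_le (a := -(k + A)) (b := k) (by omega) (by omega) (by omega)
  have h₂ := h.norm_xy_le (a := k + A) (b := k) (by omega) (by omega) (by omega)
  rw [show -(k + A) + k = -A by ring, neg_neg, hx, hx, hy] at h₁
  rw [show k + A + k = 2 * k + A by ring, hz] at h₂
  nlinarith [mul_nonneg (norm_nonneg (x (2 * k + A))) (norm_nonneg (z (k + A))),
    mul_nonneg (norm_nonneg (y (2 * k + A))) (norm_nonneg (z k))]

theorem eventually_z_eq_zero (h : TrilinearSystem x y z) (hx : ∀ n, ‖x (-n)‖ = ‖x n‖)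
    (hy : ∀ n, ‖y (-n)‖ = ‖y n‖) (hz : ∀ n, ‖z (-n)‖ = ‖z n‖)
    (hxs : Summable fun n : ℕ => ‖x n‖) (hys : Summable fun n : ℕ => ‖y n‖)
    (hzt : Tendsto (fun n : ℕ => ‖z n‖) atTop (𝓝 0)) {A : ℕ} (hA : 0 < A)
    (hxy : x A ≠ 0 ∨ y A ≠ 0) : ∀ᶠ k : ℕ in atTop, z k = 0 := by
  set μ := max ‖x A‖ ‖y A‖
  have hμ : 0 < μ := by
    rcases hxy with hxA | hyA
    · exact lt_max_of_lt_left (norm_pos_iff.2 hxA)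
    · exact lt_max_of_lt_right (norm_pos_iff.2 hyA)
  set w : ℕ → ℝ := fun k => ‖x (2 * k + A : ℕ)‖ + ‖y (2 * k + A : ℕ)‖
  have hws : Summable w := (hxs.add hys).comp_injective (i := fun k => 2 * k + A) fun i j hij => by
    simp only at hij; omega
  have hstep : ∀ k : ℕ, 1 ≤ k → (1 - 2 * w k / μ) * ‖z k‖ ≤ ‖z (k + A : ℕ)‖ := by
    intro k hk
    refine one_sub_two_mul_div_mul_le hμ (min_le_max (a := ‖x A‖) (b := ‖y A‖)) (by positivity)
      (norm_nonneg _) (norm_nonneg _) ?_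
    rcases le_total ‖x A‖ ‖y A‖ with hle | hle
    · rw [show μ = _ from max_eq_right hle, min_eq_left hle]
      exact_mod_cast h.norm_y_mul_norm_z_le hx hz (A := A) (k := k) (by omega) (by omega)
    · rw [show μ = _ from max_eq_left hle, min_eq_right hle]
      exact_mod_cast h.norm_x_mul_norm_z_le hx hy hz (A := A) (k := k) (by omega) (by omega)
  have := eventually_eq_zero_of_one_sub_mul_le hA (fun k => norm_nonneg (z k)) hzt
    (fun k => by positivity) ((hws.mul_left 2).div_const μ) (eventually_atTop.2 ⟨1, hstep⟩)
  simpa using this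

theorem eventually_y_eq_zero (h : TrilinearSystem x y z) (hx : ∀ n, ‖x (-n)‖ = ‖x n‖)
    (hz : ∀ n, ‖z (-n)‖ = ‖z n‖) (hz₀ : ∀ᶠ m : ℕ in atTop, z m = 0)
    (hyt : Tendsto (fun n : ℕ => ‖y n‖) atTop (𝓝 0)) {p : ℕ} (hp : 0 < p) (hxp : x p ≠ 0) :
    ∀ᶠ m : ℕ in atTop, y m = 0 := by
  have hstep : ∀ᶠ m : ℕ in atTop, ‖y m‖ ≤ ‖y (m + p : ℕ)‖ := by
    filter_upwards [hz₀, (tendsto_add_atTop_nat p).eventually hz₀, eventually_ge_atTop 1]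
      with m hzm hzmp hm
    push_cast at hzmp ⊢
    have h₁ := h.norm_xy_le (a := p) (b := m) (by omega) (by omega) (by omega)
    have h₂ := h.norm_yz_le (a := -p) (b := m + p) (by omega) (by omega) (by omega)
    rw [hzm, norm_zero, mul_zero, zero_add, add_comm (p : ℤ), hz] at h₁
    rw [show -(p : ℤ) + (m + p) = m by ring, neg_neg, hx, hzmp, norm_zero, mul_zero,
      add_zero] at h₂
    have hsum : (‖x p‖ + ‖z p‖) * ‖y m‖ ≤ (‖x p‖ + ‖z p‖) * ‖y (m + p)‖ := by linarith
    exact le_of_mul_le_mul_left hsum (by positivity)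
  have := eventually_eq_zero_of_one_sub_mul_le hp (fun m => norm_nonneg (y m)) hyt
    (e := 0) (fun _ => le_rfl) summable_zero (by simpa using hstep)
  simpa using this

theorem eventually_x_eq_zero (h : TrilinearSystem x y z) (hy : ∀ n, ‖y (-n)‖ = ‖y n‖)
    (hz : ∀ n, ‖z (-n)‖ = ‖z n‖) (hz₀ : ∀ᶠ m : ℕ in atTop, z m = 0)
    (hxt : Tendsto (fun n : ℕ => ‖x n‖) atTop (𝓝 0)) {q : ℕ} (hq : 0 < q) (hyq : y q ≠ 0) :
    ∀ᶠ n : ℕ in atTop, x n = 0 := by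
  have hstep : ∀ᶠ n : ℕ in atTop, ‖x n‖ ≤ ‖x (n + q : ℕ)‖ := by
    filter_upwards [hz₀, (tendsto_add_atTop_nat q).eventually hz₀, eventually_ge_atTop 1]
      with n hzn hznq hn
    push_cast at hznq ⊢
    have h₁ := h.norm_xy_le (a := n) (b := q) (by omega) (by omega) (by omega)
    have h₂ := h.norm_xz_le (a := n + q) (b := -q) (by omega) (by omega) (by omega)
    rw [hz, hzn, norm_zero, mul_zero, add_zero] at h₁
    rw [show (n : ℤ) + q + -q = n by ring, hz, hy, hz, hznq, norm_zero, mul_zero,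
      add_zero] at h₂
    have hsum : (‖y q‖ + ‖z q‖) * ‖x n‖ ≤ (‖y q‖ + ‖z q‖) * ‖x (n + q)‖ := by linarith
    exact le_of_mul_le_mul_left hsum (by positivity)
  have := eventually_eq_zero_of_one_sub_mul_le hq (fun n => norm_nonneg (x n)) hxt
    (e := 0) (fun _ => le_rfl) summable_zero (by simpa using hstep)
  simpa using this

theorem mul_eq_zero_of_eventually_eq_zero (h : TrilinearSystem x y z)
    (hx₀ : ∀ᶠ n : ℕ in atTop, x n = 0) (hy₀ : ∀ᶠ n : ℕ in atTop, y n = 0) {p q : ℕ}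
    (hp : 0 < p) (hq : 0 < q) : x p * y q = 0 := by
  by_contra hpq
  obtain ⟨p', hpp', hxp', hx'⟩ :=
    exists_le_ne_zero_and_forall_lt_eq_zero hx₀ (left_ne_zero_of_mul hpq)
  obtain ⟨q', hqq', hyq', hy'⟩ :=
    exists_le_ne_zero_and_forall_lt_eq_zero hy₀ (right_ne_zero_of_mul hpq)
  have := h p' q' (by omega) (by omega) (by omega)
  rw [show (p' : ℤ) + q' = (p' + q' : ℕ) by push_cast; ring, hx' (p' + q') (by omega),
    hy' (p' + q') (by omega), zero_mul, zero_mul, sub_zero, add_zero] at this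
  exact mul_ne_zero hxp' hyq' this

theorem z_eq_zero_of_x_eq_zero (h : TrilinearSystem x y z) (hy : ∀ n, ‖y (-n)‖ = ‖y n‖)
    (hx₀ : ∀ n, n ≠ 0 → x n = 0) {b : ℤ} (hb : b ≠ 0) (hyb : y b ≠ 0) {n : ℤ} (hn : n ≠ 0) :
    z n = 0 := by
  obtain ⟨c, hc, hyc, hnc⟩ := exists_ne_zero_and_add_ne_zero hy hb hyb n
  have := h (-n) (n + c) (neg_ne_zero.2 hn) hnc (by omega)
  rw [show -n + (n + c) = c by ring, neg_neg, hx₀ _ (neg_ne_zero.2 hn), hx₀ c hc] at this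
  simpa [hyc] using this

theorem z_eq_zero_of_y_eq_zero (h : TrilinearSystem x y z) (hx : ∀ n, ‖x (-n)‖ = ‖x n‖)
    (hy₀ : ∀ n, n ≠ 0 → y n = 0) {a : ℤ} (ha : a ≠ 0) (hxa : x a ≠ 0) {n : ℤ} (hn : n ≠ 0) :
    z n = 0 := by
  obtain ⟨c, hc, hxc, hnc⟩ := exists_ne_zero_and_add_ne_zero hx ha hxa (-n)
  have := h (c - n) n (by omega) hn (by omega)
  rw [show c - n + n = c by ring, hy₀ n hn, hy₀ c hc] at this
  simpa [hxc] using this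

end TrilinearSystem

theorem stmt_0 (x y z : ℤ → ℂ)
    (hsys : ∀ n1 n2 : ℤ, n1 ≠ 0 → n2 ≠ 0 → n1 + n2 ≠ 0 →
      x n1 * y n2 - x (n1 + n2) * z n2 + y (n1 + n2) * z (-n1) = 0)
    (hpar : ∀ n : ℤ, x (-n) = (starRingEnd ℂ) (x n) ∧ y (-n) = (starRingEnd ℂ) (y n) ∧
      z (-n) = (starRingEnd ℂ) (z n))
    (hsum : Summable (fun n : ℕ => ‖x (n + 1)‖ + ‖y (n + 1)‖ + ‖z (n + 1)‖)) :
    (∀ n : ℤ, n ≠ 0 → y n = 0 ∧ z n = 0) ∨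
    (∀ n : ℤ, n ≠ 0 → x n = 0 ∧ z n = 0) ∨
    (∀ n : ℤ, n ≠ 0 → x n = 0 ∧ y n = 0) := by
  have h : TrilinearSystem x y z := hsys
  have hx : ∀ n, ‖x (-n)‖ = ‖x n‖ := fun n => by rw [(hpar n).1, Complex.norm_conj]
  have hy : ∀ n, ‖y (-n)‖ = ‖y n‖ := fun n => by rw [(hpar n).2.1, Complex.norm_conj]
  have hz : ∀ n, ‖z (-n)‖ = ‖z n‖ := fun n => by rw [(hpar n).2.2, Complex.norm_conj]
  have hs : Summable fun n : ℕ => ‖x n‖ + ‖y n‖ + ‖z n‖ :=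
    (summable_nat_add_iff 1).1 (by exact_mod_cast hsum)
  have hxs : Summable fun n : ℕ => ‖x n‖ := hs.of_nonneg_of_le (fun _ => norm_nonneg _)
    fun n => by linarith [norm_nonneg (y n), norm_nonneg (z n)]
  have hys : Summable fun n : ℕ => ‖y n‖ := hs.of_nonneg_of_le (fun _ => norm_nonneg _)
    fun n => by linarith [norm_nonneg (x n), norm_nonneg (z n)]
  have hzs : Summable fun n : ℕ => ‖z n‖ := hs.of_nonneg_of_le (fun _ => norm_nonneg _)
    fun n => by linarith [norm_nonneg (x n), norm_nonneg (y n)]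
  by_cases hx₀ : ∀ n, n ≠ 0 → x n = 0
  · by_cases hy₀ : ∀ n, n ≠ 0 → y n = 0
    · exact Or.inr (Or.inr fun n hn => ⟨hx₀ n hn, hy₀ n hn⟩)
    push Not at hy₀
    obtain ⟨b, hb, hyb⟩ := hy₀
    exact Or.inr (Or.inl fun n hn => ⟨hx₀ n hn, h.z_eq_zero_of_x_eq_zero hy hx₀ hb hyb hn⟩)
  push Not at hx₀
  obtain ⟨a, ha, hxa⟩ := hx₀
  by_cases hy₀ : ∀ n, n ≠ 0 → y n = 0
  · exact Or.inl fun n hn => ⟨hy₀ n hn, h.z_eq_zero_of_y_eq_zero hx hy₀ ha hxa hn⟩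
  push Not at hy₀
  obtain ⟨b, hb, hyb⟩ := hy₀
  obtain ⟨p, hp, hxp⟩ := exists_pos_ne_zero hx ha hxa
  obtain ⟨q, hq, hyq⟩ := exists_pos_ne_zero hy hb hyb
  have hz₀ := h.eventually_z_eq_zero hx hy hz hxs hys hzs.tendsto_atTop_zero hp (Or.inl hxp)
  have hx₀ := h.eventually_x_eq_zero hy hz hz₀ hxs.tendsto_atTop_zero hq hyq
  have hy₀ := h.eventually_y_eq_zero hx hz hz₀ hys.tendsto_atTop_zero hp hxp
  exact absurd (h.mul_eq_zero_of_eventually_eq_zero hx₀ hy₀ hp hq) (mul_ne_zero hxp hyq)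
end

section
/- Let {x_n}, {y_n}, {z_n} be complex sequences indexed by nonzero integers satisfying x_{n1}·y_{n2} − x_{n1+n2}·z_{n2} + y_{n1+n2}·z_{−n1} = 0 for all n1 ≠ 0, n2 ≠ 0, n1+n2 ≠ 0, and the parity condition. If z_n = 0 for all n ≠ 0, then the solution is one-dimensional: either y_n = 0 for all n ≠ 0 or x_n = 0 for all n ≠ 0. -/
theorem stmt_2 (x y z : ℤ → ℂ)
    (hsys : ∀ n1 n2 : ℤ, n1 ≠ 0 → n2 ≠ 0 → n1 + n2 ≠ 0 →
      x n1 * y n2 - x (n1 + n2) * z n2 + y (n1 + n2) * z (-n1) = 0)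
    (hpar : ∀ n : ℤ, x (-n) = (starRingEnd ℂ) (x n) ∧ y (-n) = (starRingEnd ℂ) (y n) ∧
      z (-n) = (starRingEnd ℂ) (z n))
    (hz : ∀ n : ℤ, n ≠ 0 → z n = 0) :
    (∀ n : ℤ, n ≠ 0 → y n = 0) ∨ (∀ n : ℤ, n ≠ 0 → x n = 0) := by
  have key : ∀ n1 n2 : ℤ, n1 ≠ 0 → n2 ≠ 0 → n1 + n2 ≠ 0 → x n1 * y n2 = 0 := by
    intro n1 n2 h1 h2 h12
    have := hsys n1 n2 h1 h2 h12
    rw [hz n2 h2, hz (-n1) (by simpa using h1)] at this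
    simpa using this
  by_cases hy : ∀ n : ℤ, n ≠ 0 → y n = 0
  · exact Or.inl hy
  · right
    push_neg at hy
    obtain ⟨m, hm, hym⟩ := hy
    intro n hn
    by_cases hnm : n + m = 0
    · -- n = -m, use hsys with n2 = -m
      have hym' : y (-m) ≠ 0 := by
        rw [(hpar m).2.1]
        simpa using hym
      have hs : n + (-m) ≠ 0 := by omega
      have := key n (-m) hn (by simpa using hm) hs
      rcases mul_eq_zero.mp this with h | h
      · exact h
      · exact absurd h hym'
    · have := key n m hn hm hnm
      rcases mul_eq_zero.mp this with h | h
      · exact h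
      · exact absurd h hym
end

section
/- Let {x_n}, {y_n}, {z_n} be complex sequences indexed by nonzero integers satisfying the trilinear system and parity, with x_1 ≠ 0. Then either y_1 = z_1 = 0, or both y_1 ≠ 0 and z_1 ≠ 0. -/
theorem stmt_8 (x y z : ℤ → ℂ)
    (hsys : ∀ n1 n2 : ℤ, n1 ≠ 0 → n2 ≠ 0 → n1 + n2 ≠ 0 →
      x n1 * y n2 - x (n1 + n2) * z n2 + y (n1 + n2) * z (-n1) = 0)
    (hpar : ∀ n : ℤ, x (-n) = (starRingEnd ℂ) (x n) ∧ y (-n) = (starRingEnd ℂ) (y n) ∧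
      z (-n) = (starRingEnd ℂ) (z n))
    (hx1 : x 1 ≠ 0) :
    (y 1 = 0 ∧ z 1 = 0) ∨ (y 1 ≠ 0 ∧ z 1 ≠ 0) := by
  have h11 := hsys 1 1 (by norm_num) (by norm_num) (by norm_num)
  have h21 := hsys 2 (-1) (by norm_num) (by norm_num) (by norm_num)
  norm_num at h11 h21
  have hz1 := (hpar 1).2.2
  have hy1 := (hpar 1).2.1
  have hz2 := (hpar 2).2.2
  rw [hz1] at h11
  rw [hy1, hz2] at h21
  by_cases hz : z 1 = 0
  · left
    refine ⟨?_, hz⟩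
    rw [hz] at h11
    simp at h11
    rcases h11 with h | h
    · exact absurd h hx1
    · exact h
  · right
    refine ⟨?_, hz⟩
    intro hy
    rw [hy] at h21
    simp at h21
    rcases h21 with h | h
    · exact absurd h hx1
    · exact hz (by rwa [hz1, map_eq_zero] at h)
end

section
/- Let {x_n}, {y_n}, {z_n} be complex sequences indexed by nonzero integers satisfying the trilinear system, and suppose y_1 = z_1 = 0 and x_1 ≠ 0. Then for every n with n ≠ 0 and n ≠ 1, one has z_n = x_{1−n}·y_n / x_1, and for every n with n ≠ 0 and n ≠ −1, one has y_n = x_{n+1}·z_n / x_1. -/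
theorem stmt_9 (x y z : ℤ → ℂ)
    (hsys : ∀ n1 n2 : ℤ, n1 ≠ 0 → n2 ≠ 0 → n1 + n2 ≠ 0 →
      x n1 * y n2 - x (n1 + n2) * z n2 + y (n1 + n2) * z (-n1) = 0)
    (hpar : ∀ n : ℤ, x (-n) = (starRingEnd ℂ) (x n) ∧ y (-n) = (starRingEnd ℂ) (y n) ∧
      z (-n) = (starRingEnd ℂ) (z n))
    (hy1 : y 1 = 0) (hz1 : z 1 = 0) (hx1 : x 1 ≠ 0) :
    (∀ n : ℤ, n ≠ 0 → n ≠ 1 → z n = x (1 - n) * y n / x 1) ∧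
    (∀ n : ℤ, n ≠ 0 → n ≠ -1 → y n = x (n + 1) * z n / x 1) := by
  constructor
  · intro n hn0 hn1
    have h := hsys (1 - n) n (by omega) hn0 (by omega)
    rw [show (1 - n) + n = 1 by ring] at h
    rw [hy1] at h
    field_simp
    linear_combination -h
  · intro n hn0 hn1
    have h := hsys 1 n one_ne_zero hn0 (by omega)
    have hz : z (-1 : ℤ) = 0 := by
      have := (hpar 1).2.2
      simp [hz1] at this
      exact this
    rw [show (1 : ℤ) + n = n + 1 by ring, hz] at h
    field_simp
    linear_combination h
end

section
/- Let {x_n}, {y_n}, {z_n} be complex sequences indexed by nonzero integers satisfying the trilinear system and parity, with |x_1| = 1, y_1 ≠ 0, z_1 ≠ 0. Then x_n·y_n·z_n ≠ 0 for all n > 0. -/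
/-!
Write `X n = x n * x (-n)`, which is `|x n|^2` under the parity condition, and similarly `Y`, `Z`.
Combining the system at `(a, b)`, at a reindexed pair and at the negatives of both yields
quadratic identities between `X`, `Y`, `Z`; by induction they force `X n - Y n` and `Z n - Y n`
to be constant for `n ≥ 1` as soon as `X 1, Z 1 ≠ 0`.

Nonvanishing then propagates from `s` to `m = s + 1`, for `y m`, `z m`, `x m` in turn. If
`y m = 0 ≠ z m`, the system at `(m, m)` and `(-m, -m)` gives `X (2m) = Y (2m)`, so `X = Y` on
`n ≥ 1` and `x m = 0`, which the system at `(s, 1)` rules out (if also `z m = 0`, the system at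
`(-1, m)` does). If `z m = 0`, the system at `(m, m)` forces `x m = 0`, contradicting the system
at `(m, -1)`. If `x m = 0`, the system at `(2m, -m)` and `(-2m, m)` gives `X (2m) = Z (2m)`, hence
`X = Z` on `n ≥ 1` and `z m = 0`.
-/

open Complex

def IsTrilinear {R : Type*} [CommRing R] (x y z : ℤ → R) : Prop :=
  ∀ n1 n2 : ℤ, n1 ≠ 0 → n2 ≠ 0 → n1 + n2 ≠ 0 →
    x n1 * y n2 - x (n1 + n2) * z n2 + y (n1 + n2) * z (-n1) = 0

def symSq {R : Type*} [CommRing R] (x : ℤ → R) (n : ℤ) : R := x n * x (-n)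

theorem symSq_neg {R : Type*} [CommRing R] (x : ℤ → R) (n : ℤ) :
    symSq x (-n) = symSq x n := by
  simp only [symSq, neg_neg, mul_comm]

def IsConjSymm (x : ℤ → ℂ) : Prop := ∀ n, x (-n) = starRingEnd ℂ (x n)

namespace IsConjSymm

variable {x : ℤ → ℂ} (hx : IsConjSymm x) {n : ℤ}
include hx

theorem symSq_eq_normSq : symSq x n = normSq (x n) := by
  rw [symSq, hx, mul_conj]

theorem symSq_eq_zero_iff : symSq x n = 0 ↔ x n = 0 := by
  rw [hx.symSq_eq_normSq]
  exact_mod_cast normSq_eq_zero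

theorem neg_eq_zero_iff : x (-n) = 0 ↔ x n = 0 := by
  rw [hx, map_eq_zero]

end IsConjSymm

namespace IsTrilinear

section CommRing

variable {R : Type*} [CommRing R] {x y z : ℤ → R}

theorem relation (h : IsTrilinear x y z) (a b c d : ℤ) (ha : a ≠ 0) (hb : b ≠ 0)
    (hc : c ≠ 0) (habc : a + b = c) (had : a + d = 0) :
    x a * y b - x c * z b + y c * z d = 0 := by
  obtain rfl : c = a + b := habc.symm
  obtain rfl : d = -a := by omega
  exact h a b ha hb hc

variable (h : IsTrilinear x y z) {a b : ℤ} (ha : a ≠ 0) (hb : b ≠ 0) (hab : a + b ≠ 0)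
include h ha hb hab

theorem symSq_identity_xy :
    (symSq x (a + b) - symSq y (a + b)) * (symSq z b - symSq z a) =
      symSq y b * symSq x a - symSq x b * symSq y a := by
  have e1 := h.relation a b (a + b) (-a) ha hb hab rfl (by ring)
  have e2 := h.relation b a (a + b) (-b) hb ha hab (by ring) (by ring)
  have e3 := h.relation (-a) (-b) (-(a + b)) a (by omega) (by omega) (by omega) (by ring) (by ring)
  have e4 := h.relation (-b) (-a) (-(a + b)) b (by omega) (by omega) (by omega) (by ring) (by ring)
  unfold symSq
  linear_combination (-(x (-a) * y (-b))) * e1 + (x (-b) * y (-a)) * e2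
    - (x (a + b) * z b - y (a + b) * z (-a)) * e3 + (x (a + b) * z a - y (a + b) * z (-b)) * e4

theorem symSq_identity_zy :
    (symSq z b - symSq y b) * (symSq x (a + b) - symSq x a) =
      symSq y (a + b) * symSq z a - symSq y a * symSq z (a + b) := by
  have e1 := h.relation a b (a + b) (-a) ha hb hab rfl (by ring)
  have e2 := h.relation (-(a + b)) b (-a) (a + b) (by omega) hb (by omega) (by ring) (by ring)
  have e3 := h.relation (-a) (-b) (-(a + b)) a (by omega) (by omega) (by omega) (by ring) (by ring)
  have e4 := h.relation (a + b) (-b) a (-(a + b)) hab (by omega) ha (by ring) (by ring)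
  unfold symSq
  linear_combination (-(y (-(a + b)) * z a)) * e1 + (y a * z (-(a + b))) * e2
    - (x (a + b) * z b - x a * y b) * e3 + (x (-a) * z b - x (-(a + b)) * y b) * e4

theorem symSq_identity_xz :
    (symSq x a - symSq z a) * (symSq y b - symSq y (a + b)) =
      symSq x (a + b) * symSq z b - symSq x b * symSq z (a + b) := by
  have e1 := h.relation a b (a + b) (-a) ha hb hab rfl (by ring)
  have e2 := h.relation a (-(a + b)) (-b) (-a) ha (by omega) (by omega) (by ring) (by ring)
  have e3 := h.relation (-a) (-b) (-(a + b)) a (by omega) (by omega) (by omega) (by ring) (by ring)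
  have e4 := h.relation (-a) (a + b) b a (by omega) hab hb (by ring) (by ring)
  unfold symSq
  linear_combination (x (-a) * y (-b) + y (-(a + b)) * z a) * e1
    - (x (-a) * y (a + b) + y b * z a) * e2
    + (x (a + b) * z b) * e3 - (x (-b) * z (-(a + b))) * e4

end CommRing

section Field

variable {K : Type*} [Field K] [NeZero (2 : K)] {x y z : ℤ → K}

theorem symSq_sub_symSq_eq_of_one_le (h : IsTrilinear x y z) (hx1 : symSq x 1 ≠ 0)
    (hz1 : symSq z 1 ≠ 0) {s : ℤ} (hs : 1 ≤ s) :
    symSq x s - symSq y s = symSq x 1 - symSq y 1 ∧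
      symSq z s - symSq y s = symSq z 1 - symSq y 1 := by
  induction s, hs using Int.leInduction with
  | base => exact ⟨rfl, rfl⟩
  | succ s hs ih =>
    obtain ⟨ihxy, ihzy⟩ := ih
    have hxy := h.symSq_identity_xy (a := -1) (b := s + 1) (by norm_num) (by omega) (by omega)
    have hzy := h.symSq_identity_zy (a := 1) (b := s) (by norm_num) (by omega) (by omega)
    have hxz := h.symSq_identity_xz (a := s) (b := 1) (by omega) (by norm_num) (by omega)
    rw [show -1 + (s + 1) = s by ring] at hxy
    simp only [symSq_neg] at hxy
    rw [add_comm 1 s] at hzy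
    set α := symSq x (s + 1) - symSq y (s + 1) - (symSq x 1 - symSq y 1)
    set γ := symSq z (s + 1) - symSq y (s + 1) - (symSq z 1 - symSq y 1)
    have h1 : α * symSq z 1 = γ * symSq x 1 := by
      linear_combination -hxz - (symSq y (s + 1) - symSq y 1) * (ihxy - ihzy)
    have h2 : (symSq x 1 - symSq y 1) * γ = -α * symSq y 1 := by
      linear_combination hxy - (symSq z (s + 1) - symSq z 1) * ihxy
    have h3 : (symSq z 1 - symSq y 1) * α = -symSq y 1 * γ := by
      linear_combination hzy - (symSq x (s + 1) - symSq x 1) * ihzy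
    have hα : α = 0 := by
      have : α * (2 * symSq z 1) = 0 := by linear_combination h2 + h3 + h1
      simpa [hz1, two_ne_zero] using this
    have hγ : γ = 0 := by
      simpa [hα, hx1, eq_comm] using h1
    exact ⟨by linear_combination hα, by linear_combination hγ⟩

end Field

section Complex

variable {x y z : ℤ → ℂ} (h : IsTrilinear x y z)
include h

theorem symSq_two_mul_eq_of_y_eq_zero (hy : IsConjSymm y) (hz : IsConjSymm z) {n : ℤ}
    (hn : n ≠ 0) (hyn : y n = 0) (hzn : z n ≠ 0) : symSq x (2 * n) = symSq y (2 * n) := by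
  have e1 := h.relation n n (2 * n) (-n) hn hn (by omega) (by ring) (by ring)
  have e2 := h.relation (-n) (-n) (-(2 * n)) n (by omega) (by omega) (by omega) (by ring) (by ring)
  have hyn' : y (-n) = 0 := hy.neg_eq_zero_iff.2 hyn
  have hzn' : symSq z n ≠ 0 := mt hz.symSq_eq_zero_iff.1 hzn
  refine mul_right_cancel₀ hzn' ?_
  unfold symSq
  linear_combination -(x (2 * n) * z n) * e2 - y (-(2 * n)) * z n * e1
    + x (2 * n) * z n * x (-n) * hyn' + y (-(2 * n)) * z n * x n * hyn

theorem symSq_two_mul_eq_of_x_eq_zero (hx : IsConjSymm x) (hy : IsConjSymm y) {n : ℤ}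
    (hn : n ≠ 0) (hxn : x n = 0) (hyn : y n ≠ 0) : symSq x (2 * n) = symSq z (2 * n) := by
  have e1 := h.relation (2 * n) (-n) n (-(2 * n)) (by omega) (by omega) hn (by ring) (by ring)
  have e2 := h.relation (-(2 * n)) n (-n) (2 * n) (by omega) hn (by omega) (by ring) (by ring)
  have hxn' : x (-n) = 0 := hx.neg_eq_zero_iff.2 hxn
  have hyn' : symSq y n ≠ 0 := mt hy.symSq_eq_zero_iff.1 hyn
  refine mul_right_cancel₀ hyn' ?_
  unfold symSq
  linear_combination x (2 * n) * y (-n) * e2 - y (-n) * z (2 * n) * e1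
    + x (2 * n) * y (-n) * z n * hxn' - y (-n) * z (2 * n) * z (-n) * hxn

section Step

variable {s : ℤ} (hs : 1 ≤ s)
include hs

theorem y_add_one_ne_zero (hx : IsConjSymm x) (hy : IsConjSymm y) (hz : IsConjSymm z)
    (hx1 : x 1 ≠ 0) (hy1 : y 1 ≠ 0) (hz1 : z 1 ≠ 0) (hxs : x s ≠ 0) (hys : y s ≠ 0) :
    y (s + 1) ≠ 0 := by
  intro hym
  by_cases hzm : z (s + 1) = 0
  · have e := h.relation (-1) (s + 1) s 1 (by norm_num) (by omega) (by omega) (by ring) (by ring)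
    simp [hym, hzm, hys, hz1] at e
  have hxy := h.symSq_two_mul_eq_of_y_eq_zero hy hz (by omega) hym hzm
  have inv := fun n => h.symSq_sub_symSq_eq_of_one_le (s := n) (mt hx.symSq_eq_zero_iff.1 hx1)
    (mt hz.symSq_eq_zero_iff.1 hz1)
  have hxm : x (s + 1) = 0 := by
    rw [← hx.symSq_eq_zero_iff]
    linear_combination (inv (s + 1) (by omega)).1 - (inv (2 * (s + 1)) (by omega)).1 + hxy
      + hy.symSq_eq_zero_iff.2 hym
  have e := h.relation s 1 (s + 1) (-s) (by omega) (by norm_num) (by omega) rfl (by ring)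
  simp [hxm, hym, hxs, hy1] at e

theorem z_add_one_ne_zero (hz : IsConjSymm z) (hz1 : z 1 ≠ 0) (hxs : x s ≠ 0)
    (hym : y (s + 1) ≠ 0) : z (s + 1) ≠ 0 := by
  intro hzm
  have hzm' : z (-(s + 1)) = 0 := hz.neg_eq_zero_iff.2 hzm
  have e1 := h.relation (s + 1) (s + 1) (2 * (s + 1)) (-(s + 1)) (by omega)
    (by omega) (by omega) (by ring) (by ring)
  rw [hzm, hzm', mul_zero, mul_zero, sub_zero, add_zero] at e1
  have hxm : x (s + 1) = 0 := (mul_eq_zero.1 e1).resolve_right hym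
  have e2 := h.relation (s + 1) (-1) s (-(s + 1)) (by omega) (by norm_num)
    (by omega) (by ring) (by ring)
  rw [hxm, hzm', zero_mul, mul_zero, add_zero, zero_sub, neg_eq_zero] at e2
  exact (mul_ne_zero hxs (mt hz.neg_eq_zero_iff.1 hz1)) e2

theorem x_add_one_ne_zero (hx : IsConjSymm x) (hy : IsConjSymm y) (hz : IsConjSymm z)
    (hx1 : x 1 ≠ 0) (hz1 : z 1 ≠ 0) (hym : y (s + 1) ≠ 0) (hzm : z (s + 1) ≠ 0) :
    x (s + 1) ≠ 0 := by
  intro hxm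
  have hxz := h.symSq_two_mul_eq_of_x_eq_zero hx hy (by omega) hxm hym
  have inv := fun n => h.symSq_sub_symSq_eq_of_one_le (s := n) (mt hx.symSq_eq_zero_iff.1 hx1)
    (mt hz.symSq_eq_zero_iff.1 hz1)
  refine hzm (hz.symSq_eq_zero_iff.1 ?_)
  linear_combination (inv (s + 1) (by omega)).2 - (inv (s + 1) (by omega)).1
    - (inv (2 * (s + 1)) (by omega)).2 + (inv (2 * (s + 1)) (by omega)).1 - hxz
    + hx.symSq_eq_zero_iff.2 hxm

end Step

theorem ne_zero_of_one_le (hx : IsConjSymm x) (hy : IsConjSymm y) (hz : IsConjSymm z)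
    (hx1 : x 1 ≠ 0) (hy1 : y 1 ≠ 0) (hz1 : z 1 ≠ 0) {n : ℤ} (hn : 1 ≤ n) :
    x n ≠ 0 ∧ y n ≠ 0 ∧ z n ≠ 0 := by
  induction n, hn using Int.leInduction with
  | base => exact ⟨hx1, hy1, hz1⟩
  | succ s hs ih =>
    obtain ⟨hxs, hys, -⟩ := ih
    have hym := h.y_add_one_ne_zero hs hx hy hz hx1 hy1 hz1 hxs hys
    have hzm := h.z_add_one_ne_zero hs hz hz1 hxs hym
    exact ⟨h.x_add_one_ne_zero hs hx hy hz hx1 hz1 hym hzm, hym, hzm⟩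

end Complex

end IsTrilinear

theorem stmt_12 (x y z : ℤ → ℂ)
    (hsys : ∀ n1 n2 : ℤ, n1 ≠ 0 → n2 ≠ 0 → n1 + n2 ≠ 0 →
      x n1 * y n2 - x (n1 + n2) * z n2 + y (n1 + n2) * z (-n1) = 0)
    (hpar : ∀ n : ℤ, x (-n) = (starRingEnd ℂ) (x n) ∧ y (-n) = (starRingEnd ℂ) (y n) ∧
      z (-n) = (starRingEnd ℂ) (z n))
    (hx1 : ‖x 1‖ = 1) (hy1 : y 1 ≠ 0) (hz1 : z 1 ≠ 0) :
    ∀ n : ℤ, 0 < n → x n * y n * z n ≠ 0 := by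
  have hx1' : x 1 ≠ 0 := norm_ne_zero_iff.1 (by rw [hx1]; exact one_ne_zero)
  intro n hn
  obtain ⟨hxn, hyn, hzn⟩ := IsTrilinear.ne_zero_of_one_le hsys (fun n => (hpar n).1)
    (fun n => (hpar n).2.1) (fun n => (hpar n).2.2) hx1' hy1 hz1 hn
  exact mul_ne_zero (mul_ne_zero hxn hyn) hzn
end

section
/- Let {x_n}, {y_n}, {z_n} be complex sequences indexed by nonzero integers satisfying the trilinear system, parity, summability ∑_{n≥1}(|x_n|+|y_n|+|z_n|) < ∞, with |x_1| = 1, y_1 ≠ 0, z_1 ≠ 0. Then |x_n| = |y_n| = |z_n| > 0 for all n ≥ 1. (This leads to a contradiction with summability, so this case is impossible; but the equality of moduli itself is the statement to prove.) -/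
/-!
Testing the system against the index pairs `(a, b)`, `(-a, a + b)`, `(a + b, -a)` and their
swaps, suitable linear combinations show that `|x|² - |y|²` and `|y|² - |z|²` take the same
value at `a` and at `b` as soon as `x`, `y`, `z` are all nonzero at `a + b`.
Starting from index `1`, nonvanishing at `n` forces nonvanishing at `n + 1` or `n + 2`, so
there are arbitrarily large such indices; since the sequences tend to zero, both differences
vanish at `1`. Then nonvanishing propagates from `n` to `n + 1`: otherwise it holds at
`n + 2`, so the moduli at `n + 1` agree, while one of them is zero and another is not.
-/

open ComplexConjugate Filter Topology

structure IsTrilinearSolution (x y z : ℤ → ℂ) : Prop where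
  sys : ∀ n1 n2 : ℤ, n1 ≠ 0 → n2 ≠ 0 → n1 + n2 ≠ 0 →
    x n1 * y n2 - x (n1 + n2) * z n2 + y (n1 + n2) * z (-n1) = 0
  neg : ∀ n : ℤ, x (-n) = conj (x n) ∧ y (-n) = conj (y n) ∧ z (-n) = conj (z n)

def NonvanishingAt (x y z : ℤ → ℂ) (n : ℤ) : Prop :=
  x n ≠ 0 ∧ y n ≠ 0 ∧ z n ≠ 0

def EqualNormsAt (x y z : ℤ → ℂ) (n : ℤ) : Prop :=
  ‖x n‖ = ‖y n‖ ∧ ‖y n‖ = ‖z n‖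

variable {x y z : ℤ → ℂ} {a b c d : ℤ}

theorem equalNormsAt_iff {n : ℤ} :
    EqualNormsAt x y z n ↔ ‖x n‖ ^ 2 - ‖y n‖ ^ 2 = 0 ∧ ‖y n‖ ^ 2 - ‖z n‖ ^ 2 = 0 := by
  simp only [EqualNormsAt, sub_eq_zero, sq_eq_sq₀ (norm_nonneg _) (norm_nonneg _)]

theorem EqualNormsAt.nonvanishingAt {n : ℤ} (he : EqualNormsAt x y z n) (hx : x n ≠ 0) :
    NonvanishingAt x y z n := by
  refine ⟨hx, ?_, ?_⟩
  · rwa [← norm_ne_zero_iff, ← he.1, norm_ne_zero_iff]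
  · rwa [← norm_ne_zero_iff, ← he.2, ← he.1, norm_ne_zero_iff]

namespace IsTrilinearSolution

theorem sys_add (h : IsTrilinearSolution x y z) (ha : a ≠ 0) (hb : b ≠ 0) (hc : c ≠ 0)
    (habc : a + b = c) : x a * y b - x c * z b + y c * conj (z a) = 0 := by
  subst habc
  simpa only [(h.neg a).2.2] using h.sys a b ha hb hc

theorem sys_neg_add (h : IsTrilinearSolution x y z) (ha : a ≠ 0) (hb : b ≠ 0) (hc : c ≠ 0)
    (habc : a + b = c) : conj (x a) * y c - x b * z c + y b * z a = 0 := by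
  have := h.sys (-a) c (neg_ne_zero.mpr ha) hc (by omega)
  rwa [show -a + c = b by omega, neg_neg, (h.neg a).1] at this

theorem sys_add_neg (h : IsTrilinearSolution x y z) (ha : a ≠ 0) (hb : b ≠ 0) (hc : c ≠ 0)
    (habc : a + b = c) : x c * conj (y a) - x b * conj (z a) + y b * conj (z c) = 0 := by
  have := h.sys c (-a) hc (neg_ne_zero.mpr ha) (by omega)
  rwa [show c + -a = b by omega, (h.neg a).2.1, (h.neg a).2.2, (h.neg c).2.2] at this

theorem sq_norm_x_sub_sq_norm_z_eq (h : IsTrilinearSolution x y z) (ha : a ≠ 0) (hb : b ≠ 0)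
    (hc : c ≠ 0) (habc : a + b = c) (hy : y c ≠ 0) :
    ‖x a‖ ^ 2 - ‖z a‖ ^ 2 = ‖x b‖ ^ 2 - ‖z b‖ ^ 2 := by
  have hbac : b + a = c := (add_comm b a).trans habc
  have key : ((‖x a‖ ^ 2 - ‖z a‖ ^ 2 - (‖x b‖ ^ 2 - ‖z b‖ ^ 2) : ℝ) : ℂ) * y c = 0 := by
    push_cast
    simp only [← Complex.mul_conj']
    linear_combination x a * h.sys_neg_add ha hb hc habc - x b * h.sys_neg_add hb ha hc hbac -
      z a * h.sys_add ha hb hc habc + z b * h.sys_add hb ha hc hbac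
  rw [mul_eq_zero, or_iff_left hy, Complex.ofReal_eq_zero, sub_eq_zero] at key
  exact key

theorem sq_norm_y_sub_sq_norm_z_eq (h : IsTrilinearSolution x y z) (ha : a ≠ 0) (hb : b ≠ 0)
    (hc : c ≠ 0) (habc : a + b = c) (hx : x c ≠ 0) :
    ‖y a‖ ^ 2 - ‖z a‖ ^ 2 = ‖y b‖ ^ 2 - ‖z b‖ ^ 2 := by
  have hbac : b + a = c := (add_comm b a).trans habc
  have key : ((‖y a‖ ^ 2 - ‖z a‖ ^ 2 - (‖y b‖ ^ 2 - ‖z b‖ ^ 2) : ℝ) : ℂ) * x c = 0 := by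
    push_cast
    simp only [← Complex.mul_conj']
    linear_combination conj (z a) * h.sys_add hb ha hc hbac -
      conj (z b) * h.sys_add ha hb hc habc + y a * h.sys_add_neg ha hb hc habc -
      y b * h.sys_add_neg hb ha hc hbac
  rw [mul_eq_zero, or_iff_left hx, Complex.ofReal_eq_zero, sub_eq_zero] at key
  exact key

theorem sq_norm_sub_eq_of_nonvanishingAt (h : IsTrilinearSolution x y z) (ha : a ≠ 0) (hb : b ≠ 0) (hc : c ≠ 0)
    (habc : a + b = c) (hnc : NonvanishingAt x y z c) :
    ‖x a‖ ^ 2 - ‖y a‖ ^ 2 = ‖x b‖ ^ 2 - ‖y b‖ ^ 2 ∧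
      ‖y a‖ ^ 2 - ‖z a‖ ^ 2 = ‖y b‖ ^ 2 - ‖z b‖ ^ 2 := by
  have hxz := h.sq_norm_x_sub_sq_norm_z_eq ha hb hc habc hnc.2.1
  have hyz := h.sq_norm_y_sub_sq_norm_z_eq ha hb hc habc hnc.1
  exact ⟨by linarith, hyz⟩

theorem equalNormsAt_of_nonvanishingAt (h : IsTrilinearSolution x y z) (ha : a ≠ 0)
    (hb : b ≠ 0) (hc : c ≠ 0) (habc : a + b = c) (hnc : NonvanishingAt x y z c)
    (heb : EqualNormsAt x y z b) : EqualNormsAt x y z a := by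
  rw [equalNormsAt_iff] at heb ⊢
  obtain ⟨hxy, hyz⟩ := h.sq_norm_sub_eq_of_nonvanishingAt ha hb hc habc hnc
  exact ⟨hxy.trans heb.1, hyz.trans heb.2⟩

theorem ne_zero_or_ne_zero (h : IsTrilinearSolution x y z) (ha : a ≠ 0) (hb : b ≠ 0)
    (hc : c ≠ 0) (habc : a + b = c) (hna : NonvanishingAt x y z a)
    (hnb : NonvanishingAt x y z b) :
    (x c ≠ 0 ∨ y c ≠ 0) ∧ (x c ≠ 0 ∨ z c ≠ 0) ∧ (y c ≠ 0 ∨ z c ≠ 0) := by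
  obtain ⟨hxa, hya, hza⟩ := hna
  obtain ⟨hxb, hyb, hzb⟩ := hnb
  have hbac : b + a = c := (add_comm b a).trans habc
  simp only [← not_and_or]
  refine ⟨fun ⟨hx, hy⟩ => ?_, fun ⟨hx, hz⟩ => ?_, fun ⟨hy, hz⟩ => ?_⟩
  · have := h.sys_add hb ha hc hbac
    rw [hx, hy] at this
    exact mul_ne_zero hxb hya (by linear_combination this)
  · have := h.sys_add_neg hb ha hc hbac
    rw [hx, hz, map_zero] at this
    exact mul_ne_zero hxa ((map_ne_zero _).mpr hzb) (by linear_combination -this)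
  · have := h.sys_neg_add hb ha hc hbac
    rw [hy, hz] at this
    exact mul_ne_zero hya hzb (by linear_combination this)

theorem nonvanishingAt_add_of_x_eq_zero (h : IsTrilinearSolution x y z) (ha : a ≠ 0)
    (hb : b ≠ 0) (hc : c ≠ 0) (habc : a + b = c) (hx : x a = 0) (hy : y a ≠ 0) (hz : z a ≠ 0)
    (hnb : NonvanishingAt x y z b) : NonvanishingAt x y z c := by
  obtain ⟨hxb, hyb, hzb⟩ := hnb
  have hbac : b + a = c := (add_comm b a).trans habc
  have hx' : conj (x a) = 0 := by rw [hx, map_zero]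
  have hzc : z c ≠ 0 := fun h0 => mul_ne_zero hyb hz <| by
    linear_combination h.sys_neg_add ha hb hc habc - y c * hx' + x b * h0
  have hyc : y c ≠ 0 := fun h0 => mul_ne_zero hy hzb <| by
    linear_combination h.sys_neg_add hb ha hc hbac - conj (x b) * h0 + z c * hx
  have hxc : x c ≠ 0 := fun h0 => mul_ne_zero hyc ((map_ne_zero _).mpr hz) <| by
    linear_combination h.sys_add ha hb hc habc - y b * hx + z b * h0
  exact ⟨hxc, hyc, hzc⟩

theorem nonvanishingAt_add_of_y_eq_zero (h : IsTrilinearSolution x y z) (ha : a ≠ 0)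
    (hb : b ≠ 0) (hc : c ≠ 0) (habc : a + b = c) (hx : x a ≠ 0) (hy : y a = 0) (hz : z a ≠ 0)
    (hnb : NonvanishingAt x y z b) : NonvanishingAt x y z c := by
  obtain ⟨hxb, hyb, hzb⟩ := hnb
  have hbac : b + a = c := (add_comm b a).trans habc
  have hy' : conj (y a) = 0 := by rw [hy, map_zero]
  have hzc : z c ≠ 0 := (map_ne_zero (starRingEnd ℂ)).mp fun h0 =>
    mul_ne_zero hxb ((map_ne_zero _).mpr hz) <| by
      linear_combination -h.sys_add_neg ha hb hc habc + x c * hy' + y b * h0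
  have hxc : x c ≠ 0 := fun h0 => mul_ne_zero hx ((map_ne_zero _).mpr hzb) <| by
    linear_combination -h.sys_add_neg hb ha hc hbac + conj (y b) * h0 + conj (z c) * hy
  have hyc : y c ≠ 0 := fun h0 => mul_ne_zero hx hzc <| by
    linear_combination -h.sys_neg_add hb ha hc hbac + conj (x b) * h0 + z b * hy
  exact ⟨hxc, hyc, hzc⟩

theorem nonvanishingAt_add_of_z_eq_zero (h : IsTrilinearSolution x y z) (ha : a ≠ 0)
    (hb : b ≠ 0) (hc : c ≠ 0) (habc : a + b = c) (hx : x a ≠ 0) (hy : y a ≠ 0) (hz : z a = 0)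
    (hnb : NonvanishingAt x y z b) : NonvanishingAt x y z c := by
  obtain ⟨hxb, hyb, hzb⟩ := hnb
  have hbac : b + a = c := (add_comm b a).trans habc
  have hz' : conj (z a) = 0 := by rw [hz, map_zero]
  have hxc : x c ≠ 0 := fun h0 => mul_ne_zero hx hyb <| by
    linear_combination h.sys_add ha hb hc habc + z b * h0 - y c * hz'
  have hyc : y c ≠ 0 := fun h0 => mul_ne_zero hxb hy <| by
    linear_combination h.sys_add hb ha hc hbac + x c * hz - conj (z b) * h0
  have hzc : z c ≠ 0 := (map_ne_zero (starRingEnd ℂ)).mp fun h0 =>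
    mul_ne_zero hxc ((map_ne_zero _).mpr hy) <| by
      linear_combination h.sys_add_neg ha hb hc habc + x b * hz' - y b * h0
  exact ⟨hxc, hyc, hzc⟩

theorem nonvanishingAt_add_or_add_add (h : IsTrilinearSolution x y z) (ha : a ≠ 0)
    (hb : b ≠ 0) (hc : c ≠ 0) (hd : d ≠ 0) (habc : a + b = c) (hcbd : c + b = d)
    (hna : NonvanishingAt x y z a) (hnb : NonvanishingAt x y z b) :
    NonvanishingAt x y z c ∨ NonvanishingAt x y z d := by
  obtain ⟨hxy, hxz, hyz⟩ := h.ne_zero_or_ne_zero ha hb hc habc hna hnb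
  by_cases hx : x c = 0
  · exact .inr <| h.nonvanishingAt_add_of_x_eq_zero hc hb hd hcbd hx
      (hxy.resolve_left (· hx)) (hxz.resolve_left (· hx)) hnb
  by_cases hy : y c = 0
  · exact .inr <| h.nonvanishingAt_add_of_y_eq_zero hc hb hd hcbd hx hy
      (hyz.resolve_left (· hy)) hnb
  by_cases hz : z c = 0
  · exact .inr <| h.nonvanishingAt_add_of_z_eq_zero hc hb hd hcbd hx hy hz hnb
  exact .inl ⟨hx, hy, hz⟩

theorem frequently_nonvanishingAt (h : IsTrilinearSolution x y z)
    (h1 : NonvanishingAt x y z 1) : ∃ᶠ n : ℕ in atTop, NonvanishingAt x y z (n + 1 + 1) := by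
  have hstep (n : ℤ) (hn : 1 ≤ n) (hgood : NonvanishingAt x y z n) :
      ∃ m, n < m ∧ NonvanishingAt x y z m :=
    (h.nonvanishingAt_add_or_add_add (by omega) one_ne_zero (by omega) (by omega) rfl rfl
      hgood h1).elim (⟨_, by omega, ·⟩) (⟨_, by omega, ·⟩)
  have hunbounded (N : ℕ) : ∃ m : ℤ, N + 1 ≤ m ∧ NonvanishingAt x y z m := by
    induction N with
    | zero => exact ⟨1, le_rfl, h1⟩
    | succ N ih =>
      obtain ⟨m, hm, hgood⟩ := ih
      obtain ⟨m', hm', hgood'⟩ := hstep m (by omega) hgood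
      exact ⟨m', by push_cast; omega, hgood'⟩
  refine frequently_atTop.mpr fun N => ?_
  obtain ⟨m, hm, hgood⟩ := hunbounded (N + 1)
  refine ⟨(m - 2).toNat, by omega, ?_⟩
  rwa [show ((m - 2).toNat : ℤ) + 1 + 1 = m by omega]

theorem equalNormsAt_one (h : IsTrilinearSolution x y z) (h1 : NonvanishingAt x y z 1)
    (hsum : Summable fun n : ℕ => ‖x (n + 1)‖ + ‖y (n + 1)‖ + ‖z (n + 1)‖) :
    EqualNormsAt x y z 1 := by
  have hlim := hsum.tendsto_atTop_zero
  have hx : Tendsto (fun n : ℕ => ‖x (n + 1)‖) atTop (𝓝 0) := squeeze_zero (fun _ => norm_nonneg _)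
    (fun n => by linarith [norm_nonneg (y (n + 1)), norm_nonneg (z (n + 1))]) hlim
  have hy : Tendsto (fun n : ℕ => ‖y (n + 1)‖) atTop (𝓝 0) := squeeze_zero (fun _ => norm_nonneg _)
    (fun n => by linarith [norm_nonneg (x (n + 1)), norm_nonneg (z (n + 1))]) hlim
  have hz : Tendsto (fun n : ℕ => ‖z (n + 1)‖) atTop (𝓝 0) := squeeze_zero (fun _ => norm_nonneg _)
    (fun n => by linarith [norm_nonneg (x (n + 1)), norm_nonneg (y (n + 1))]) hlim
  have hgaps := (h.frequently_nonvanishingAt h1).mono fun n hn =>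
    h.sq_norm_sub_eq_of_nonvanishingAt (by omega) one_ne_zero (by omega) rfl hn
  have hxy := tendsto_nhds_unique_of_frequently_eq ((hx.pow 2).sub (hy.pow 2))
    tendsto_const_nhds (hgaps.mono fun _ => And.left)
  have hyz := tendsto_nhds_unique_of_frequently_eq ((hy.pow 2).sub (hz.pow 2))
    tendsto_const_nhds (hgaps.mono fun _ => And.right)
  exact equalNormsAt_iff.mpr ⟨by linarith, by linarith⟩

theorem nonvanishingAt_of_one_le (h : IsTrilinearSolution x y z)
    (h1 : NonvanishingAt x y z 1) (he1 : EqualNormsAt x y z 1) :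
    ∀ n : ℤ, 1 ≤ n → NonvanishingAt x y z n := by
  refine Int.leInduction h1 fun n hn hgood => ?_
  by_contra hn1
  have hn2 := (h.nonvanishingAt_add_or_add_add (by omega) one_ne_zero (by omega) (by omega)
    rfl rfl hgood h1).resolve_left hn1
  have he := h.equalNormsAt_of_nonvanishingAt (by omega) one_ne_zero (by omega) rfl hn2 he1
  have hxy := (h.ne_zero_or_ne_zero (by omega) one_ne_zero (by omega) rfl hgood h1).1
  refine hn1 (he.nonvanishingAt (hxy.elim id fun hy => ?_))
  rwa [← norm_ne_zero_iff, he.1, norm_ne_zero_iff]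

end IsTrilinearSolution

theorem stmt_13 (x y z : ℤ → ℂ)
    (hsys : ∀ n1 n2 : ℤ, n1 ≠ 0 → n2 ≠ 0 → n1 + n2 ≠ 0 →
      x n1 * y n2 - x (n1 + n2) * z n2 + y (n1 + n2) * z (-n1) = 0)
    (hpar : ∀ n : ℤ, x (-n) = (starRingEnd ℂ) (x n) ∧ y (-n) = (starRingEnd ℂ) (y n) ∧
      z (-n) = (starRingEnd ℂ) (z n))
    (hsum : Summable (fun n : ℕ => ‖x (n + 1)‖ + ‖y (n + 1)‖ + ‖z (n + 1)‖))
    (hx1 : ‖x 1‖ = 1) (hy1 : y 1 ≠ 0) (hz1 : z 1 ≠ 0) :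
    ∀ n : ℤ, 1 ≤ n →
      ‖x n‖ = ‖y n‖ ∧
      ‖y n‖ = ‖z n‖ ∧
      0 < ‖x n‖ := by
  have h : IsTrilinearSolution x y z := ⟨hsys, hpar⟩
  have h1 : NonvanishingAt x y z 1 := ⟨norm_ne_zero_iff.mp (hx1 ▸ one_ne_zero), hy1, hz1⟩
  have he1 := h.equalNormsAt_one h1 hsum
  have hgood := h.nonvanishingAt_of_one_le h1 he1
  intro n hn
  obtain ⟨hxy, hyz⟩ := h.equalNormsAt_of_nonvanishingAt (a := n) (by omega) one_ne_zero
    (by omega) rfl (hgood (n + 1) (by omega)) he1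
  exact ⟨hxy, hyz, norm_pos_iff.mpr (hgood n hn).1⟩
end
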